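/- Let L be the lattice with basis C, F, E_1, ..., E_7 as above, K = -2C - 2F + Σ E_n, and let G be a group of automorphisms of L preserving the form, F and K, such that for every j ∈ {1,...,7} there exists τ_j ∈ G with τ_j(E_j) = F - E_j. Then the sublattice of G-invariant elements of L equals Z·K ⊕ Z·F. -/

import Mathlib

/-- The geometric Picard lattice of a standard rational conic bundle of degree 1:
the free abelian group with basis `C, F, E₁, …, E₇`, realized as `Fin 9 → ℤ`
(coordinate 0 for `C`, coordinate 1 for `F`, coordinates 2–8 for `E₁,…,E₇`). -/
abbrev Pic1 := Fin 9 → ℤ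

/-- The index in `Fin 9` of the basis vector `E_n`. -/
def eIdx (n : Fin 7) : Fin 9 := ⟨n.1 + 2, by have := n.isLt; omega⟩

/-- The basis class `C`. -/
def Cv : Pic1 := fun i => if i = 0 then 1 else 0

/-- The basis class `F` (the class of a fiber). -/
def Fv : Pic1 := fun i => if i = 1 then 1 else 0

/-- The basis class `E_n`. -/
def Ev (n : Fin 7) : Pic1 := fun i => if i = eIdx n then 1 else 0

/-- The intersection pairing: `C·C = F·F = 0`, `C·F = 1`, `E_i·E_i = -1`, and all
other products among basis vectors vanish. -/
def B (v w : Pic1) : ℤ :=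
  v 0 * w 1 + v 1 * w 0 - ∑ n : Fin 7, v (eIdx n) * w (eIdx n)

/-- The canonical class `K = -2C - 2F + E₁ + ⋯ + E₇`. -/
def Kv : Pic1 := fun i => -2 * Cv i - 2 * Fv i + ∑ n : Fin 7, Ev n i


/-!
For an invariant `v`, applying the isometry `τⱼ` to `v·Eⱼ` gives `v·Eⱼ = v·(F - Eⱼ)`, i.e.
`v·F = 2 v·Eⱼ`. In coordinates `v = c C + f F + Σ eₙ Eₙ` this reads `c = -2 eⱼ` for every `j`,
so all `eⱼ` equal a common `e`, and then `v = e K + (f + 2e) F`.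
-/

lemma eIdx_ne_zero (j : Fin 7) : eIdx j ≠ 0 :=
  fun h => absurd (congrArg Fin.val h) (by simp [eIdx])

lemma eIdx_ne_one (j : Fin 7) : eIdx j ≠ 1 := by
  simp [eIdx, Fin.ext_iff]

lemma eIdx_injective : Function.Injective eIdx := by
  intro a b h
  simpa [eIdx, Fin.ext_iff] using h

lemma eq_zero_or_eq_one_or_eq_eIdx (i : Fin 9) : i = 0 ∨ i = 1 ∨ ∃ j, i = eIdx j := by
  obtain ⟨_ | _ | k, hk⟩ := i
  · exact .inl rfl
  · exact .inr (.inl rfl)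
  · exact .inr (.inr ⟨⟨k, by omega⟩, rfl⟩)

lemma Ev_apply_eIdx (j n : Fin 7) : Ev j (eIdx n) = if n = j then 1 else 0 := by
  simp [Ev, eIdx_injective.eq_iff]

lemma Kv_apply_zero : Kv 0 = -2 := by
  simp [Kv, Cv, Fv, Ev, (eIdx_ne_zero _).symm]

lemma Kv_apply_one : Kv 1 = -2 := by
  simp [Kv, Cv, Fv, Ev, (eIdx_ne_one _).symm]

lemma Kv_apply_eIdx (j : Fin 7) : Kv (eIdx j) = 1 := by
  simp [Kv, Cv, Fv, Ev_apply_eIdx, eIdx_ne_zero, eIdx_ne_one]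

lemma B_sub_right (v w w' : Pic1) : B v (w - w') = B v w - B v w' := by
  simp only [B, Pi.sub_apply, mul_sub, Finset.sum_sub_distrib]
  ring

lemma B_Fv (v : Pic1) : B v Fv = v 0 := by
  simp [B, Fv, eIdx_ne_one]

lemma B_Ev (v : Pic1) (j : Fin 7) : B v (Ev j) = -v (eIdx j) := by
  simp [B, Ev, (eIdx_ne_zero j).symm, (eIdx_ne_one j).symm, eIdx_injective.eq_iff]

lemma eq_smul_Kv_add_smul_Fv {v : Pic1} (hv : ∀ j, v 0 = -2 * v (eIdx j)) :
    v = v (eIdx 0) • Kv + (v 1 + 2 * v (eIdx 0)) • Fv := by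
  funext i
  rcases eq_zero_or_eq_one_or_eq_eIdx i with rfl | rfl | ⟨j, rfl⟩
  · simp only [Pi.add_apply, Pi.smul_apply, smul_eq_mul, Kv_apply_zero, Fv, if_neg zero_ne_one]
    linarith [hv 0]
  · simp only [Pi.add_apply, Pi.smul_apply, smul_eq_mul, Kv_apply_one, Fv, if_pos]
    ring
  · simp only [Pi.add_apply, Pi.smul_apply, smul_eq_mul, Kv_apply_eIdx, Fv, if_neg (eIdx_ne_one j)]
    linarith [hv 0, hv j]

/-- Let `G` be a group of automorphisms of the lattice `L` preserving the form, `F`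
and `K`, such that for every `j ∈ {1,…,7}` some `τⱼ ∈ G` sends `Eⱼ` to `F - Eⱼ`.
Then the `G`-invariant elements of `L` are exactly `ℤ·K ⊕ ℤ·F`. -/
theorem invariant_sublattice_eq_ZK_plus_ZF
    (G : Subgroup ((Fin 9 → ℤ) ≃ₗ[ℤ] (Fin 9 → ℤ)))
    (hform : ∀ τ ∈ G, ∀ v w : Pic1, B (τ v) (τ w) = B v w)
    (hF : ∀ τ ∈ G, τ Fv = Fv)
    (hK : ∀ τ ∈ G, τ Kv = Kv)
    (hswap : ∀ j : Fin 7, ∃ τ ∈ G, τ (Ev j) = Fv - Ev j) :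
    ∀ v : Pic1, (∀ τ ∈ G, τ v = v) ↔ ∃ m n : ℤ, v = m • Kv + n • Fv := by
  intro v
  constructor
  · intro hv
    have hcoord : ∀ j, v 0 = -2 * v (eIdx j) := by
      intro j
      obtain ⟨τ, hτ, hτE⟩ := hswap j
      have h := hform τ hτ v (Ev j)
      rw [hv τ hτ, hτE, B_sub_right, B_Fv, B_Ev] at h
      linarith
    exact ⟨_, _, eq_smul_Kv_add_smul_Fv hcoord⟩
  · rintro ⟨m, n, rfl⟩ τ hτ
    rw [map_add, map_smul, map_smul, hF τ hτ, hK τ hτ]
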